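/- arXiv:2512.01833 — 3 statements merged into one kernel-verified Lean document; each statement's English description precedes it below -/
import Mathlib

section
/- For every real number x ≥ 0 and every natural number L, the Poisson tail satisfies ∑_{n=0}^{L} e^{-x} x^n / n! ≥ 1 - (max(2, x))^L / L!. Equivalently, ∑_{n=L+1}^{∞} e^{-x} x^n / n! ≤ (max(2, x))^L / L!. -/
/-!
The Poisson tail `1 - ∑_{n ≤ L} e^{-x} x^n / n!` equals `e^{-x} ∑_{k ≥ 1} x^{L+k} / (L+k)!`.
Since `L! k! ≤ (L+k)!`, each term is at most `x^L / L! · x^k / k!`, so the tail is at most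
`e^{-x} · x^L / L! · (e^x - 1) ≤ x^L / L!`.
-/

open Nat Finset Real

namespace Real

theorem hasSum_pow_div_factorial (x : ℝ) : HasSum (fun n ↦ x ^ n / n !) (exp x) :=
  exp_eq_exp_ℝ ▸ NormedSpace.expSeries_div_hasSum_exp x

theorem hasSum_pow_div_factorial_add (x : ℝ) (N : ℕ) :
    HasSum (fun k ↦ x ^ (N + k) / (N + k)!) (exp x - ∑ n ∈ range N, x ^ n / n !) := by
  simpa only [add_comm N] using (hasSum_nat_add_iff' N).mpr (hasSum_pow_div_factorial x)

theorem pow_div_factorial_add_le {x : ℝ} (hx : 0 ≤ x) (m n : ℕ) :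
    x ^ (m + n) / (m + n)! ≤ x ^ m / m ! * (x ^ n / n !) := by
  rw [_root_.div_mul_div_comm, ← pow_add]
  gcongr
  exact_mod_cast Nat.le_of_dvd (factorial_pos _) (factorial_mul_factorial_dvd_factorial_add m n)

theorem exp_sub_sum_range_succ_le {x : ℝ} (hx : 0 ≤ x) (L : ℕ) :
    exp x - ∑ n ∈ range (L + 1), x ^ n / n ! ≤ x ^ L / L ! * (exp x - 1) := by
  have htail := hasSum_pow_div_factorial_add x
  calc exp x - ∑ n ∈ range (L + 1), x ^ n / n !
      = ∑' k, x ^ (L + 1 + k) / (L + 1 + k)! := (htail (L + 1)).tsum_eq.symm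
    _ ≤ ∑' k, x ^ L / L ! * (x ^ (1 + k) / (1 + k)!) :=
        (htail (L + 1)).summable.tsum_le_tsum
          (fun k ↦ by simpa only [add_assoc] using pow_div_factorial_add_le hx L (1 + k))
          ((htail 1).summable.mul_left _)
    _ = x ^ L / L ! * (exp x - 1) := by simp [((htail 1).mul_left _).tsum_eq]

theorem exp_neg_mul_exp_sub_sum_range_succ_le {x : ℝ} (hx : 0 ≤ x) (L : ℕ) :
    exp (-x) * (exp x - ∑ n ∈ range (L + 1), x ^ n / n !) ≤ x ^ L / L ! := by
  calc exp (-x) * (exp x - ∑ n ∈ range (L + 1), x ^ n / n !)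
      ≤ exp (-x) * (x ^ L / L ! * (exp x - 1)) := by
        gcongr
        exact exp_sub_sum_range_succ_le hx L
    _ = x ^ L / L ! * (1 - exp (-x)) := by
        rw [mul_left_comm, mul_sub, ← exp_add, neg_add_cancel, exp_zero, mul_one]
    _ ≤ x ^ L / L ! := mul_le_of_le_one_right (by positivity) (by linarith [exp_pos (-x)])

end Real

/-- Poisson tail bound (Lemma 4, part 1, of the paper): for `x ≥ 0` and `L : ℕ`,
`∑_{n=0}^{L} e^{-x} x^n / n! ≥ 1 - (max 2 x)^L / L!`, and equivalently the tail
`∑_{n=L+1}^{∞} e^{-x} x^n / n! ≤ (max 2 x)^L / L!`. -/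
theorem poisson_tail_bound (x : ℝ) (hx : 0 ≤ x) (L : ℕ) :
    1 - (max 2 x) ^ L / (Nat.factorial L : ℝ) ≤
      ∑ n ∈ Finset.range (L + 1), Real.exp (-x) * x ^ n / (Nat.factorial n : ℝ) ∧
    (∑' k : ℕ, Real.exp (-x) * x ^ (L + 1 + k) / (Nat.factorial (L + 1 + k) : ℝ)) ≤
      (max 2 x) ^ L / (Nat.factorial L : ℝ) := by
  let tail := exp (-x) * (exp x - ∑ n ∈ range (L + 1), x ^ n / n !)
  have htail_le : tail ≤ (max 2 x) ^ L / L ! :=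
    (exp_neg_mul_exp_sub_sum_range_succ_le hx L).trans (by gcongr; exact le_max_right 2 x)
  have hsum : HasSum (fun k ↦ exp (-x) * x ^ (L + 1 + k) / (L + 1 + k)!) tail := by
    simpa only [mul_div_assoc] using (hasSum_pow_div_factorial_add x (L + 1)).mul_left (exp (-x))
  have hhead : ∑ n ∈ range (L + 1), exp (-x) * x ^ n / n ! = 1 - tail := by
    simp only [tail, mul_sub, ← exp_add, neg_add_cancel, exp_zero, mul_sum, sub_sub_cancel,
      mul_div_assoc]
  exact ⟨by linarith, hsum.tsum_eq ▸ htail_le⟩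
end

section
/- Let E > 0, let ε ∈ (0,1), and let L be a natural number with L + 1 ≥ (E+1) · ln(1/ε). Then (1/(πE)) ∫_{ℂ} e^{-|α|²/E} ( ∑_{n=0}^{L} e^{-|α|²} |α|^{2n} / n! ) dλ(α) ≥ 1 - ε, where the integral is with respect to Lebesgue measure λ on ℂ identified with ℝ². -/
/-!
Averaging the Poisson weights `e^{-|α|²}|α|^{2n}/n!` against the Gaussian `e^{-|α|²/E}/(πE)`
is a Gamma integral in polar coordinates and yields the geometric photon-number distribution
`E^n/(E+1)^{n+1}` of the thermal state. Hence the truncated sum equals `1 - q^{L+1}` with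
`q = E/(E+1) = 1 - 1/(E+1) ≤ e^{-1/(E+1)}`, and the tail `q^{L+1} ≤ e^{-(L+1)/(E+1)}` is at most
`ε` by the choice of `L`.
-/

open MeasureTheory Real Finset
open scoped Nat

namespace Complex

theorem integral_exp_neg_mul_sq_norm_mul_norm_pow {b : ℝ} (hb : 0 < b) (n : ℕ) :
    ∫ z : ℂ, rexp (-b * ‖z‖ ^ 2) * ‖z‖ ^ (2 * n) = π * n ! / b ^ (n + 1) := by
  have hrpow : ∀ z : ℂ, rexp (-b * ‖z‖ ^ 2) * ‖z‖ ^ (2 * n)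
      = ‖z‖ ^ ((2 * n : ℕ) : ℝ) * rexp (-b * ‖z‖ ^ (2 : ℝ)) := fun z => by
    rw [rpow_natCast, rpow_ofNat, mul_comm]
  simp_rw [hrpow]
  rw [integral_rpow_mul_exp_neg_mul_rpow one_le_two
      ((neg_lt_zero.2 two_pos).trans_le (Nat.cast_nonneg _)) hb,
    show (-(((2 * n : ℕ) : ℝ) + 2) / 2) = -((n + 1 : ℕ) : ℝ) by push_cast; ring,
    show (((2 * n : ℕ) : ℝ) + 2) / 2 = ((n : ℝ) + 1) by push_cast; ring,
    rpow_neg hb.le, rpow_natCast, Real.Gamma_nat_eq_factorial]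
  field_simp

theorem integrable_exp_neg_mul_sq_norm_mul_norm_pow {b : ℝ} (hb : 0 < b) (n : ℕ) :
    Integrable fun z : ℂ => rexp (-b * ‖z‖ ^ 2) * ‖z‖ ^ (2 * n) :=
  .of_integral_ne_zero <| by
    rw [integral_exp_neg_mul_sq_norm_mul_norm_pow hb]; positivity

end Complex

section ThermalState

variable {E : ℝ}

theorem exp_neg_sq_div_mul_poisson_eq (n : ℕ) (α : ℂ) :
    rexp (-‖α‖ ^ 2 / E) * (rexp (-‖α‖ ^ 2) * ‖α‖ ^ (2 * n) / n !)
      = (n ! : ℝ)⁻¹ * (rexp (-(E⁻¹ + 1) * ‖α‖ ^ 2) * ‖α‖ ^ (2 * n)) := by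
  rw [show -(E⁻¹ + 1) * ‖α‖ ^ 2 = -‖α‖ ^ 2 / E + -‖α‖ ^ 2 by ring, exp_add]
  ring

theorem integrable_exp_neg_sq_div_mul_poisson (hE : 0 < E) (n : ℕ) :
    Integrable fun α : ℂ => rexp (-‖α‖ ^ 2 / E) * (rexp (-‖α‖ ^ 2) * ‖α‖ ^ (2 * n) / n !) := by
  simp_rw [exp_neg_sq_div_mul_poisson_eq n]
  exact (Complex.integrable_exp_neg_mul_sq_norm_mul_norm_pow (by positivity) n).const_mul _

theorem thermal_photon_number_prob (hE : 0 < E) (n : ℕ) :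
    1 / (π * E) * ∫ α : ℂ, rexp (-‖α‖ ^ 2 / E) * (rexp (-‖α‖ ^ 2) * ‖α‖ ^ (2 * n) / n !)
      = E ^ n / (E + 1) ^ (n + 1) := by
  simp_rw [exp_neg_sq_div_mul_poisson_eq n]
  rw [integral_const_mul,
    Complex.integral_exp_neg_mul_sq_norm_mul_norm_pow (by positivity),
    show E⁻¹ + 1 = (E + 1) / E by field_simp; ring, div_pow]
  field_simp
  ring

theorem sum_range_pow_div_add_one_pow (hE : E + 1 ≠ 0) (k : ℕ) :
    ∑ n ∈ range k, E ^ n / (E + 1) ^ (n + 1) = 1 - (E / (E + 1)) ^ k := by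
  rw [← mul_neg_geom_sum, mul_sum]
  refine sum_congr rfl fun n _ => ?_
  rw [one_sub_div hE, add_sub_cancel_left, div_pow, pow_succ]
  field_simp

theorem div_add_one_pow_le_exp_neg (hE : 0 ≤ E) (k : ℕ) :
    (E / (E + 1)) ^ k ≤ rexp (-k / (E + 1)) := by
  have hq : E / (E + 1) = 1 - 1 / (E + 1) := by field_simp; ring
  calc (E / (E + 1)) ^ k ≤ rexp (-(1 / (E + 1))) ^ k := by
        rw [hq]; exact pow_le_pow_left₀ (by rw [← hq]; positivity) (one_sub_le_exp_neg _) k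
    _ = rexp (-k / (E + 1)) := by rw [← exp_nat_mul]; ring_nf

end ThermalState

theorem thermal_truncation_bound_general (E ε : ℝ) (hE : 0 < E) (hε0 : 0 < ε)
    (L : ℕ) (hL : (E + 1) * Real.log (1 / ε) ≤ (L : ℝ) + 1) :
    1 - ε ≤ (1 / (Real.pi * E)) *
      ∫ α : ℂ, Real.exp (-‖α‖ ^ 2 / E) *
        ∑ n ∈ Finset.range (L + 1),
          Real.exp (-‖α‖ ^ 2) * ‖α‖ ^ (2 * n) / (Nat.factorial n : ℝ) := by
  have htail : (E / (E + 1)) ^ (L + 1) ≤ ε := by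
    refine (div_add_one_pow_le_exp_neg hE.le _).trans ?_
    rw [← le_log_iff_exp_le hε0, neg_div, neg_le, ← log_inv, ← one_div, le_div_iff₀ (by positivity)]
    push_cast
    linarith
  calc 1 - ε ≤ 1 - (E / (E + 1)) ^ (L + 1) := by linarith
    _ = ∑ n ∈ range (L + 1), E ^ n / (E + 1) ^ (n + 1) :=
      (sum_range_pow_div_add_one_pow (by positivity) _).symm
    _ = ∑ n ∈ range (L + 1), 1 / (π * E) *
          ∫ α : ℂ, rexp (-‖α‖ ^ 2 / E) * (rexp (-‖α‖ ^ 2) * ‖α‖ ^ (2 * n) / n !) := by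
      simp_rw [thermal_photon_number_prob hE]
    _ = _ := by
      rw [← mul_sum, ← integral_finsetSum _ fun n _ => integrable_exp_neg_sq_div_mul_poisson hE n]
      simp_rw [mul_sum]

/-- Lemma 4, part 2, of the paper at the level of photon-number statistics:
if `E > 0`, `ε ∈ (0,1)` and `L + 1 ≥ (E+1)·ln(1/ε)`, then
`(1/(πE)) ∫_ℂ e^{-|α|²/E} (∑_{n=0}^{L} e^{-|α|²}|α|^{2n}/n!) dα ≥ 1 - ε`. -/
theorem thermal_truncation_bound (E ε : ℝ) (hE : 0 < E) (hε0 : 0 < ε) (hε1 : ε < 1)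
    (L : ℕ) (hL : (E + 1) * Real.log (1 / ε) ≤ (L : ℝ) + 1) :
    1 - ε ≤ (1 / (Real.pi * E)) *
      ∫ α : ℂ, Real.exp (-‖α‖ ^ 2 / E) *
        ∑ n ∈ Finset.range (L + 1),
          Real.exp (-‖α‖ ^ 2) * ‖α‖ ^ (2 * n) / (Nat.factorial n : ℝ) :=
  thermal_truncation_bound_general E ε hE hε0 L hL
end

section
/- Let ρ be a d×d complex positive semidefinite matrix with trace 1 (a density matrix), and let Π be a d×d Hermitian matrix with 0 ≤ Π ≤ I. If tr(Πρ) ≥ 1 - ε for some ε ≥ 0, then ‖√Π ρ √Π - ρ‖₁ ≤ 2√ε, where √Π denotes the positive semidefinite square root of Π and ‖A‖₁ = tr√(AᴴA) denotes the trace norm. -/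
/-!
Write `S = √Q`, so that `SρS - ρ = (S - 1)ρS + ρ(S - 1)`. The trace norm of this Hermitian
matrix is `tr (U (SρS - ρ))` for the unitary `U = sign (SρS - ρ)`, and Cauchy–Schwarz for the
semi-inner product `⟪X, Y⟫ = tr (Y ρ Xᴴ)` bounds both terms by `√(tr ((S - 1) ρ (S - 1)))`.
Since `0 ≤ Q ≤ 1` forces `Q ≤ S`, that quantity is `tr (Qρ) - 2 tr (Sρ) + tr ρ ≤ 1 - tr (Qρ) ≤ ε`.
-/

open scoped ComplexOrder

/-- The positive semidefinite square root of a positive semidefinite matrix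
(the definition `Matrix.PosSemidef.sqrt` of the older Mathlib, since removed). -/
noncomputable def Matrix.PosSemidef.sqrt {n 𝕜 : Type*} [Fintype n] [DecidableEq n] [RCLike 𝕜]
    {A : Matrix n n 𝕜} (hA : A.PosSemidef) : Matrix n n 𝕜 :=
  hA.1.eigenvectorUnitary.1 * Matrix.diagonal ((↑) ∘ (Real.sqrt ∘ hA.1.eigenvalues)) *
    (star hA.1.eigenvectorUnitary : Matrix n n 𝕜)

/-- The trace norm of a square complex matrix: `‖A‖₁ = tr √(Aᴴ A)`. -/
noncomputable def traceNorm {d : ℕ} (A : Matrix (Fin d) (Fin d) ℂ) : ℝ :=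
  ((Matrix.posSemidef_conjTranspose_mul_self A).sqrt).trace.re

open scoped MatrixOrder

namespace CFC

variable {A : Type*} [Ring A] [StarRing A] [TopologicalSpace A] [Algebra ℝ A]
  [ContinuousFunctionalCalculus ℝ A IsSelfAdjoint] [PartialOrder A] [StarOrderedRing A]
  [NonnegSpectrumClass ℝ A] [IsTopologicalRing A] [T2Space A]

theorem le_sqrt_of_le_one {a : A} (ha : 0 ≤ a) (ha₁ : a ≤ 1) : a ≤ CFC.sqrt a := by
  have hspec : ∀ x ∈ spectrum ℝ a, x ≤ 1 := by
    simpa using (le_algebraMap_iff_spectrum_le (r := (1 : ℝ)) (a := a)).mp (by simpa using ha₁)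
  rw [sqrt_eq_real_sqrt a, cfcₙ_eq_cfc]
  nth_rw 1 [← cfc_id' ℝ a]
  exact cfc_mono fun x hx => Real.le_sqrt_self_iff.mpr (hspec x hx)

end CFC

namespace Matrix

variable {n 𝕜 : Type*} [Fintype n] [RCLike 𝕜]

theorem PosSemidef.sqrt_eq_cfc_sqrt [DecidableEq n] {A : Matrix n n 𝕜} (hA : A.PosSemidef) :
    hA.sqrt = CFC.sqrt A := by
  rw [CFC.sqrt_eq_real_sqrt A hA.nonneg, cfcₙ_eq_cfc, hA.1.cfc_eq]
  rfl

theorem trace_mul_nonneg {A B : Matrix n n 𝕜} (hA : 0 ≤ A) (hB : 0 ≤ B) : 0 ≤ (A * B).trace := by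
  classical
  have hAB : (A * B).trace = (CFC.sqrt A * B * CFC.sqrt A).trace := by
    rw [trace_mul_cycle, CFC.sqrt_mul_sqrt_self A]
  rw [hAB]
  have := (nonneg_iff_posSemidef.mp hB).mul_mul_conjTranspose_same (CFC.sqrt A)
  rw [← star_eq_conjTranspose, (CFC.sqrt_nonneg A).isSelfAdjoint.star_eq] at this
  exact this.trace_nonneg

theorem trace_mul_le_trace_mul_of_le {A B ρ : Matrix n n 𝕜} (hAB : A ≤ B) (hρ : 0 ≤ ρ) :
    (A * ρ).trace ≤ (B * ρ).trace := by
  rw [← sub_nonneg, ← trace_sub, ← sub_mul]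
  exact trace_mul_nonneg (sub_nonneg.mpr hAB) hρ

theorem PosSemidef.norm_trace_mul_mul_le {ρ : Matrix n n 𝕜} (hρ : ρ.PosSemidef)
    (A B : Matrix n n 𝕜) :
    ‖(A * ρ * B).trace‖ ≤
      √(RCLike.re (A * ρ * Aᴴ).trace) * √(RCLike.re (Bᴴ * ρ * B).trace) := by
  let := ρ.toMatrixSeminormedAddCommGroup hρ
  let := ρ.toMatrixInnerProductSpace hρ
  have : ‖(A * ρ * Bᴴᴴ).trace‖ ≤
      √(RCLike.re (Bᴴ * ρ * Bᴴᴴ).trace) * √(RCLike.re (A * ρ * Aᴴ).trace) := by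
    have h := norm_inner_le_norm (𝕜 := 𝕜) Bᴴ A
    rwa [norm_eq_sqrt_re_inner (𝕜 := 𝕜) Bᴴ, norm_eq_sqrt_re_inner (𝕜 := 𝕜) A] at h
  rwa [conjTranspose_conjTranspose, mul_comm] at this

theorem IsHermitian.exists_mem_unitary_mul_eq_abs [DecidableEq n] {A : Matrix n n 𝕜}
    (hA : A.IsHermitian) :
    ∃ U ∈ unitary (Matrix n n 𝕜), U * A = CFC.abs A := by
  set sign : ℝ → ℝ := fun x => if 0 ≤ x then 1 else -1
  have hcont : ContinuousOn sign (spectrum ℝ A) := (spectrum ℝ A).toFinite.continuousOn sign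
  have hU : IsSelfAdjoint (cfc sign A) := cfc_predicate sign A
  refine ⟨cfc sign A, ?_, ?_⟩
  · have h1 : cfc sign A * cfc sign A = 1 := by
      rw [← cfc_mul sign sign A, ← cfc_one ℝ A]
      exact cfc_congr fun x _ => by by_cases hx : 0 ≤ x <;> simp [sign, hx]
    rw [Unitary.mem_iff, hU.star_eq]
    exact ⟨h1, h1⟩
  · rw [CFC.abs_eq_cfc_norm A hA.isSelfAdjoint]
    have hmul : cfc sign A * A = cfc (fun x => sign x * x) A := by
      rw [cfc_mul sign (fun x => x) A, cfc_id' ℝ A]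
    rw [hmul]
    refine cfc_congr fun x _ => ?_
    by_cases hx : 0 ≤ x <;> simp [sign, hx, abs_of_nonneg, abs_of_neg, not_le.mp]

theorem PosSemidef.norm_trace_unitary_mul_le [DecidableEq n] {ρ U : Matrix n n 𝕜}
    (hρ : ρ.PosSemidef) (hU : U ∈ unitary (Matrix n n 𝕜)) (A B : Matrix n n 𝕜) :
    ‖(U * (A * ρ * B)).trace‖ ≤
      √(RCLike.re (A * ρ * Aᴴ).trace) * √(RCLike.re (Bᴴ * ρ * B).trace) := by
  have hconj : (U * A * ρ * (U * A)ᴴ).trace = (A * ρ * Aᴴ).trace := by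
    rw [conjTranspose_mul, ← star_eq_conjTranspose U, ← mul_assoc, trace_mul_comm]
    simp only [← mul_assoc, Unitary.star_mul_self_of_mem hU, one_mul]
  rw [← hconj, ← mul_assoc, ← mul_assoc]
  exact hρ.norm_trace_mul_mul_le (U * A) B

section Measurement

variable [DecidableEq n] {ρ Q : Matrix n n 𝕜}

theorem re_trace_sqrt_sub_one_mul_mul_sqrt_sub_one_le (hρ : ρ.PosSemidef) (hQ : Q.PosSemidef)
    (hQ₁ : Q ≤ 1) :
    RCLike.re ((CFC.sqrt Q - 1) * ρ * (CFC.sqrt Q - 1)).trace ≤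
      RCLike.re ρ.trace - RCLike.re (Q * ρ).trace := by
  set S := CFC.sqrt Q
  have hQS : RCLike.re (Q * ρ).trace ≤ RCLike.re (S * ρ).trace :=
    (RCLike.le_iff_re_im.mp <|
      trace_mul_le_trace_mul_of_le (CFC.le_sqrt_of_le_one hQ.nonneg hQ₁) hρ.nonneg).1
  have hSρS : (S * ρ * S).trace = (Q * ρ).trace := by
    rw [trace_mul_cycle, CFC.sqrt_mul_sqrt_self Q]
  have hexpand : (S - 1) * ρ * (S - 1) = S * ρ * S - S * ρ - ρ * S + ρ := by noncomm_ring
  rw [hexpand, trace_add, trace_sub, trace_sub, hSρS, trace_mul_comm ρ S]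
  simp only [map_add, map_sub]
  linarith

theorem re_trace_abs_sqrt_mul_mul_sqrt_sub_self_le (hρ : ρ.PosSemidef) (hQ : Q.PosSemidef)
    (hQ₁ : Q ≤ 1) :
    RCLike.re (CFC.abs (CFC.sqrt Q * ρ * CFC.sqrt Q - ρ)).trace ≤
      2 * √(RCLike.re ρ.trace) * √(RCLike.re ρ.trace - RCLike.re (Q * ρ).trace) := by
  set S := CFC.sqrt Q
  set δ := RCLike.re ((S - 1) * ρ * (S - 1)).trace
  have hS : Sᴴ = S := (CFC.sqrt_nonneg Q).isSelfAdjoint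
  have hS₁ : (S - 1)ᴴ = S - 1 := by rw [conjTranspose_sub, hS, conjTranspose_one]
  have hSρS : RCLike.re (Sᴴ * ρ * S).trace ≤ RCLike.re ρ.trace := by
    rw [hS, trace_mul_cycle, CFC.sqrt_mul_sqrt_self Q]
    simpa only [one_mul] using
      (RCLike.le_iff_re_im.mp (trace_mul_le_trace_mul_of_le hQ₁ hρ.nonneg)).1
  have hM : (S * ρ * S - ρ).IsHermitian := by
    have := (isHermitian_conjTranspose_mul_mul S hρ.isHermitian).sub hρ.isHermitian
    rwa [hS] at this
  obtain ⟨U, hU, hUM⟩ := hM.exists_mem_unitary_mul_eq_abs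
  have hsplit : U * (S * ρ * S - ρ) = U * ((S - 1) * ρ * S) + U * (1 * ρ * (S - 1)) := by
    noncomm_ring
  have h₁ : RCLike.re (U * ((S - 1) * ρ * S)).trace ≤ √δ * √(RCLike.re ρ.trace) := by
    refine (RCLike.re_le_norm _).trans ((hρ.norm_trace_unitary_mul_le hU (S - 1) S).trans ?_)
    rw [hS₁]
    gcongr
  have h₂ : RCLike.re (U * (1 * ρ * (S - 1))).trace ≤ √(RCLike.re ρ.trace) * √δ := by
    refine (RCLike.re_le_norm _).trans ((hρ.norm_trace_unitary_mul_le hU 1 (S - 1)).trans ?_)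
    rw [hS₁, conjTranspose_one, mul_one, one_mul]
  have hδ : √δ ≤ √(RCLike.re ρ.trace - RCLike.re (Q * ρ).trace) :=
    Real.sqrt_le_sqrt (re_trace_sqrt_sub_one_mul_mul_sqrt_sub_one_le hρ hQ hQ₁)
  rw [← hUM, hsplit, trace_add, map_add]
  calc _ ≤ √δ * √(RCLike.re ρ.trace) + √(RCLike.re ρ.trace) * √δ := add_le_add h₁ h₂
    _ = 2 * √(RCLike.re ρ.trace) * √δ := by ring
    _ ≤ _ := by gcongr

end Measurement

end Matrix

theorem traceNorm_eq_re_trace_abs {d : ℕ} (A : Matrix (Fin d) (Fin d) ℂ) :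
    traceNorm A = (CFC.abs A).trace.re := by
  rw [traceNorm, Matrix.PosSemidef.sqrt_eq_cfc_sqrt]
  rfl

theorem gentle_operator_lemma_general {d : ℕ} (ρ Q : Matrix (Fin d) (Fin d) ℂ)
    (hρ : ρ.PosSemidef) (hρtr : ρ.trace = 1)
    (hQ : Q.PosSemidef) (hQ1 : (1 - Q).PosSemidef)
    (ε : ℝ) (h : 1 - ε ≤ (Matrix.trace (Q * ρ)).re) :
    traceNorm (hQ.sqrt * ρ * hQ.sqrt - ρ) ≤ 2 * Real.sqrt ε := by
  rw [hQ.sqrt_eq_cfc_sqrt, traceNorm_eq_re_trace_abs]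
  refine (Matrix.re_trace_abs_sqrt_mul_mul_sqrt_sub_self_le hρ hQ (Matrix.le_iff.mpr hQ1)).trans ?_
  simp only [RCLike.re_to_complex, hρtr, Complex.one_re, Real.sqrt_one, mul_one]
  gcongr
  linarith

/-- Gentle Operator Lemma (Lemma 1 of the paper): if `ρ` is a density matrix,
`0 ≤ Q ≤ 1` is a measurement operator, and `tr(Qρ) ≥ 1 - ε` with `ε ≥ 0`, then
`‖√Q ρ √Q - ρ‖₁ ≤ 2√ε`. -/
theorem gentle_operator_lemma {d : ℕ} (ρ Q : Matrix (Fin d) (Fin d) ℂ)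
    (hρ : ρ.PosSemidef) (hρtr : ρ.trace = 1)
    (hQ : Q.PosSemidef) (hQ1 : (1 - Q).PosSemidef)
    (ε : ℝ) (hε : 0 ≤ ε) (h : 1 - ε ≤ (Matrix.trace (Q * ρ)).re) :
    traceNorm (hQ.sqrt * ρ * hQ.sqrt - ρ) ≤ 2 * Real.sqrt ε :=
  gentle_operator_lemma_general ρ Q hρ hρtr hQ hQ1 ε h
end
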